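/- Let k ≥ 2 and let V₁, V₂ be the closed unit balls of two Banach algebra norms on ℂ^k, each of which satisfies von Neumann's inequality. For V ⊆ ℂ^k, set V̂ := {(v₂,...,v_k) ∈ ℂ^{k-1} : (0, v₂,...,v_k) ∈ V}. Then V₁ = V₂ if and only if V̂₁ = V̂₂. -/

import Mathlib

/-- `N` is a Banach algebra norm on `ℂ^k` (coordinatewise operations, unit `1 = (1,...,1)`). -/
def IsBanachAlgebraNorm (k : ℕ) (N : (Fin k → ℂ) → ℝ) : Prop :=
  (∀ v, N v = 0 ↔ v = 0) ∧
  (∀ (c : ℂ) (v), N (c • v) = ‖c‖ * N v) ∧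
  (∀ v w, N (v + w) ≤ N v + N w) ∧
  (∀ v w, N (v * w) ≤ N v * N w) ∧
  N 1 = 1

/-- `sup {|p(z)| : |z| ≤ 1}` for a one-variable complex polynomial `p`. -/
noncomputable def supDisk (p : Polynomial ℂ) : ℝ :=
  sSup {t : ℝ | ∃ z : ℂ, ‖z‖ ≤ 1 ∧ t = ‖Polynomial.eval z p‖}

/-- The norm `N` on `ℂ^k` satisfies von Neumann's inequality. -/
def SatisfiesVonNeumann (k : ℕ) (N : (Fin k → ℂ) → ℝ) : Prop :=
  ∀ v : Fin k → ℂ, N v ≤ 1 → ∀ p : Polynomial ℂ,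
    N (fun i => Polynomial.eval (v i) p) ≤ supDisk p

/-- For `V ⊆ ℂ^{k+1}`, the slice `V̂ = {(v₂,...,v_{k+1}) : (0,v₂,...,v_{k+1}) ∈ V}`. -/
def hat (k : ℕ) (V : Set (Fin (k + 1) → ℂ)) : Set (Fin k → ℂ) :=
  {u | Fin.cons (0 : ℂ) u ∈ V}

section Aux
variable {k : ℕ} {N : (Fin (k+1) → ℂ) → ℝ}

lemma ban_zero (h : IsBanachAlgebraNorm (k+1) N) : N 0 = 0 := (h.1 0).2 rfl

lemma ban_nonneg (h : IsBanachAlgebraNorm (k+1) N) (v : Fin (k+1) → ℂ) : 0 ≤ N v := by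
  have h1 : N (v + (-1 : ℂ) • v) ≤ N v + N ((-1 : ℂ) • v) := h.2.2.1 _ _
  have h2 : N ((-1 : ℂ) • v) = N v := by rw [h.2.1]; simp
  have h3 : v + (-1 : ℂ) • v = 0 := by ext i; simp
  rw [h3, ban_zero h, h2] at h1
  linarith

lemma ban_sum_le (h : IsBanachAlgebraNorm (k+1) N) {ι : Type*} (s : Finset ι)
    (f : ι → (Fin (k+1) → ℂ)) : N (∑ i ∈ s, f i) ≤ ∑ i ∈ s, N (f i) := by
  classical
  induction s using Finset.induction with
  | empty => simp [ban_zero h]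
  | insert _ _ hx ih =>
    rw [Finset.sum_insert hx, Finset.sum_insert hx]
    exact le_trans (h.2.2.1 _ _) (by linarith)

lemma ban_coord_bound (h : IsBanachAlgebraNorm (k+1) N) (v : Fin (k+1) → ℂ) :
    N v ≤ ∑ i, ‖v i‖ * N (Pi.single i 1) := by
  have hv : v = ∑ i, Pi.single i (v i) := (Finset.univ_sum_single v).symm
  calc N v = N (∑ i, Pi.single i (v i)) := by rw [← hv]
    _ ≤ ∑ i, N (Pi.single i (v i)) := ban_sum_le h _ _
    _ = ∑ i, ‖v i‖ * N (Pi.single i 1) := by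
        refine Finset.sum_congr rfl fun i _ => ?_
        have : Pi.single i (v i) = (v i) • (Pi.single i (1 : ℂ) : Fin (k+1) → ℂ) := by
          ext j
          by_cases hj : j = i <;> simp [Pi.single_apply, hj]
        rw [this, h.2.1]

lemma ban_continuous (h : IsBanachAlgebraNorm (k+1) N) : Continuous N := by
  set L : ℝ := ∑ i : Fin (k+1), N (Pi.single i 1) with hL
  have hL0 : 0 ≤ L := Finset.sum_nonneg fun i _ => ban_nonneg h _
  have key : ∀ x y : Fin (k+1) → ℂ, N x - N y ≤ L * ‖x - y‖ := by
    intro x y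
    have h1 : N x ≤ N y + N (x - y) := by
      have := h.2.2.1 y (x - y); simpa using this
    have h2 : N (x - y) ≤ L * ‖x - y‖ := by
      calc N (x - y) ≤ ∑ i, ‖(x - y) i‖ * N (Pi.single i 1) := ban_coord_bound h _
        _ ≤ ∑ i, ‖x - y‖ * N (Pi.single i 1) := by
            refine Finset.sum_le_sum fun i _ => ?_
            exact mul_le_mul_of_nonneg_right (norm_le_pi_norm _ i) (ban_nonneg h _)
        _ = L * ‖x - y‖ := by rw [hL, Finset.sum_mul]; ring_nf
    linarith
  have : LipschitzWith ⟨L, hL0⟩ N := by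
    refine LipschitzWith.of_dist_le_mul fun x y => ?_
    rw [Real.dist_eq, dist_eq_norm, abs_sub_le_iff]
    constructor
    · exact key x y
    · have := key y x; rwa [← norm_neg, neg_sub] at this
  exact this.continuous

lemma ban_norm_lower (h : IsBanachAlgebraNorm (k+1) N) :
    ∃ m > 0, ∀ v : Fin (k+1) → ℂ, m * ‖v‖ ≤ N v := by
  have hne : (Metric.sphere (0 : Fin (k+1) → ℂ) 1).Nonempty := by
    refine ⟨(fun _ => 1 : Fin (k+1) → ℂ), ?_⟩
    simp [pi_norm_const]
  obtain ⟨v₀, hv₀, hmin⟩ := (isCompact_sphere (0 : Fin (k+1) → ℂ) 1).exists_isMinOn hne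
    (ban_continuous h).continuousOn
  have hv₀ne : v₀ ≠ 0 := by
    intro hv
    rw [Metric.mem_sphere, hv] at hv₀; simp at hv₀
  have hm0 : 0 < N v₀ := lt_of_le_of_ne (ban_nonneg h _) (fun hc => hv₀ne ((h.1 v₀).1 hc.symm))
  refine ⟨N v₀, hm0, fun v => ?_⟩
  by_cases hv : v = 0
  · simp [hv, ban_zero h]
  · have hnv : (0:ℝ) < ‖v‖ := norm_pos_iff.2 hv
    set u : Fin (k+1) → ℂ := ((‖v‖⁻¹ : ℝ) : ℂ) • v with hu
    have hus : u ∈ Metric.sphere (0 : Fin (k+1) → ℂ) 1 := by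
      rw [Metric.mem_sphere, dist_zero_right, hu, norm_smul]
      simp [abs_of_pos (inv_pos.2 hnv), inv_mul_cancel₀ hnv.ne']
    have h1 : N v₀ ≤ N u := hmin hus
    have h2 : N u = ‖v‖⁻¹ * N v := by
      rw [hu, h.2.1]; simp [abs_of_pos (inv_pos.2 hnv)]
    rw [h2] at h1
    calc N v₀ * ‖v‖ ≤ (‖v‖⁻¹ * N v) * ‖v‖ := by nlinarith
      _ = N v := by field_simp

lemma ban_coord_le_one (h : IsBanachAlgebraNorm (k+1) N) (v : Fin (k+1) → ℂ)
    (hv : N v ≤ 1) (i : Fin (k+1)) : ‖v i‖ ≤ 1 := by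
  obtain ⟨m, hm0, hm⟩ := ban_norm_lower h
  by_contra hgt
  push_neg at hgt
  have hpow : ∀ n : ℕ, N (v ^ n) ≤ 1 := by
    intro n
    induction n with
    | zero => simp [pow_zero, h.2.2.2.2]
    | succ n ih =>
      rw [pow_succ]
      calc N (v ^ n * v) ≤ N (v ^ n) * N v := h.2.2.2.1 _ _
        _ ≤ 1 := by nlinarith [ban_nonneg h (v ^ n)]
  obtain ⟨n, hn⟩ := pow_unbounded_of_one_lt (m⁻¹) hgt
  have h1 : ‖(v ^ n) i‖ ≤ ‖v ^ n‖ := norm_le_pi_norm _ i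
  have h2 : m * ‖v ^ n‖ ≤ N (v ^ n) := hm _
  have h3 : (v ^ n) i = (v i) ^ n := by simp [Pi.pow_apply]
  rw [h3, norm_pow] at h1
  have : m * ‖v i‖ ^ n ≤ 1 := le_trans (le_trans (by nlinarith) h2) (hpow n)
  have h4 := mul_lt_mul_of_pos_left hn hm0
  rw [mul_inv_cancel₀ hm0.ne'] at h4
  linarith

end Aux

section Mobius
open Polynomial

/-- approximating polynomial for the Möbius map `z ↦ (z-a)/(1-āz)` -/
noncomputable def mobPoly (a : ℂ) (n : ℕ) : Polynomial ℂ :=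
  (X - C a) * ∑ j ∈ Finset.range n, C ((starRingEnd ℂ a) ^ j) * X ^ j

lemma mobPoly_eval (a z : ℂ) (n : ℕ) :
    (mobPoly a n).eval z = (z - a) * ∑ j ∈ Finset.range n, (starRingEnd ℂ a * z) ^ j := by
  simp [mobPoly, eval_finset_sum, mul_pow]

lemma mob_norm_le_one {a z : ℂ} (ha : ‖a‖ < 1) (hz : ‖z‖ ≤ 1) :
    ‖(z - a) / (1 - starRingEnd ℂ a * z)‖ ≤ 1 := by
  rw [norm_div]
  have hden : ‖z - a‖ ≤ ‖1 - starRingEnd ℂ a * z‖ := by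
    have h1 : Complex.normSq (z - a) ≤ Complex.normSq (1 - starRingEnd ℂ a * z) := by
      have hz2 : z.re * z.re + z.im * z.im ≤ 1 := by
        have hh := Complex.sq_norm z
        rw [Complex.normSq_apply] at hh
        have h1 : ‖z‖ ≤ 1 := hz
        nlinarith [norm_nonneg z]
      have ha2 : a.re * a.re + a.im * a.im ≤ 1 := by
        have hh := Complex.sq_norm a
        rw [Complex.normSq_apply] at hh
        have h1 : ‖a‖ ≤ 1 := le_of_lt ha
        nlinarith [norm_nonneg a]
      simp only [Complex.normSq_apply, Complex.sub_re, Complex.sub_im, Complex.mul_re,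
        Complex.mul_im, Complex.one_re, Complex.one_im, Complex.conj_re, Complex.conj_im,
        RingHom.coe_coe, Complex.star_def]
      nlinarith [mul_nonneg (sub_nonneg.2 hz2) (sub_nonneg.2 ha2)]
    have := Real.sqrt_le_sqrt h1
    rwa [← Complex.norm_def, ← Complex.norm_def] at this
  rcases eq_or_ne (1 - starRingEnd ℂ a * z) 0 with h0 | h0
  · simp [h0]
  · rw [div_le_one (norm_pos_iff.2 h0)]; exact hden

lemma mob_den_norm {a z : ℂ} (ha : ‖a‖ < 1) (hz : ‖z‖ ≤ 1) :
    1 - ‖a‖ ≤ ‖1 - starRingEnd ℂ a * z‖ ∧ (1 - starRingEnd ℂ a * z) ≠ 0 := by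
  have hax : ‖starRingEnd ℂ a * z‖ ≤ ‖a‖ := by
    rw [norm_mul, RCLike.norm_conj]
    nlinarith [norm_nonneg a, norm_nonneg z]
  have h1 : 1 - ‖a‖ ≤ ‖1 - starRingEnd ℂ a * z‖ := by
    have := norm_sub_norm_le (1 : ℂ) (starRingEnd ℂ a * z)
    simp only [norm_one] at this
    linarith
  exact ⟨h1, fun hc => by rw [hc, norm_zero] at h1; linarith⟩

lemma mob_approx {a z : ℂ} (ha : ‖a‖ < 1) (hz : ‖z‖ ≤ 1) (n : ℕ) :
    ‖(z - a) / (1 - starRingEnd ℂ a * z) - (mobPoly a n).eval z‖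
      ≤ (1 + ‖a‖) / (1 - ‖a‖) * ‖a‖ ^ n := by
  obtain ⟨hd1, hd0⟩ := mob_den_norm ha hz
  set x := starRingEnd ℂ a * z with hx
  have hxne : x ≠ 1 := fun hc => hd0 (by rw [hc, sub_self])
  have hgeom := geom_sum_eq hxne n
  have heval : (mobPoly a n).eval z = (z - a) * ((x ^ n - 1) / (x - 1)) := by
    rw [mobPoly_eval, hgeom]
  have hxe : (1 : ℂ) - x ≠ 0 := hd0
  have key : (z - a) / (1 - x) - (mobPoly a n).eval z = (z - a) * x ^ n / (1 - x) := by
    rw [heval]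
    have hx1 : x - 1 ≠ 0 := fun hc => hxe (by rw [← neg_sub x 1, hc]; ring)
    field_simp
    ring
  rw [key, norm_div, norm_mul, norm_pow]
  have hza : ‖z - a‖ ≤ 1 + ‖a‖ := le_trans (norm_sub_le _ _) (by linarith)
  have hxa : ‖x‖ ≤ ‖a‖ := by
    rw [hx, norm_mul, RCLike.norm_conj]
    nlinarith [norm_nonneg a, norm_nonneg z]
  have h1a : (0:ℝ) < 1 - ‖a‖ := by linarith
  have hxan : ‖x‖ ^ n ≤ ‖a‖ ^ n := pow_le_pow_left₀ (norm_nonneg x) hxa n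
  calc ‖z - a‖ * ‖x‖ ^ n / ‖1 - x‖ ≤ (1 + ‖a‖) * ‖a‖ ^ n / (1 - ‖a‖) := by
        apply div_le_div₀ (by positivity) ?_ h1a hd1
        exact mul_le_mul hza hxan (by positivity) (by positivity)
    _ = (1 + ‖a‖) / (1 - ‖a‖) * ‖a‖ ^ n := by ring

lemma supDisk_mobPoly_le {a : ℂ} (ha : ‖a‖ < 1) (n : ℕ) :
    supDisk (mobPoly a n) ≤ 1 + (1 + ‖a‖) / (1 - ‖a‖) * ‖a‖ ^ n := by
  have hnn : (0:ℝ) ≤ (1 + ‖a‖) / (1 - ‖a‖) * ‖a‖ ^ n := by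
    have : (0:ℝ) < 1 - ‖a‖ := by linarith
    positivity
  apply Real.sSup_le _ (by linarith)
  rintro t ⟨z, hz, rfl⟩
  have h1 := mob_approx ha hz n
  have h2 := mob_norm_le_one ha hz
  calc ‖(mobPoly a n).eval z‖
      ≤ ‖(z - a) / (1 - starRingEnd ℂ a * z)‖
        + ‖(z - a) / (1 - starRingEnd ℂ a * z) - (mobPoly a n).eval z‖ := by
        have := norm_sub_le ((z - a) / (1 - starRingEnd ℂ a * z))
          ((z - a) / (1 - starRingEnd ℂ a * z) - (mobPoly a n).eval z)
        simpa using this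
    _ ≤ 1 + (1 + ‖a‖) / (1 - ‖a‖) * ‖a‖ ^ n := add_le_add h2 h1

end Mobius

section Main
open Polynomial Filter

variable {k : ℕ}

lemma mobius_step {N : (Fin (k+1) → ℂ) → ℝ} (h : IsBanachAlgebraNorm (k+1) N)
    (hvn : SatisfiesVonNeumann (k+1) N) {a : ℂ} (ha : ‖a‖ < 1)
    {u : Fin (k+1) → ℂ} (hu : N u ≤ 1) :
    N (fun i => (u i - a) / (1 - starRingEnd ℂ a * u i)) ≤ 1 := by
  have hcoord : ∀ i, ‖u i‖ ≤ 1 := ban_coord_le_one h u hu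
  set L : ℝ := ∑ i : Fin (k+1), N (Pi.single i 1) with hLdef
  have hL0 : 0 ≤ L := Finset.sum_nonneg fun i _ => ban_nonneg h _
  set w : Fin (k+1) → ℂ := fun i => (u i - a) / (1 - starRingEnd ℂ a * u i) with hw
  set ε : ℕ → ℝ := fun n => (1 + ‖a‖) / (1 - ‖a‖) * ‖a‖ ^ n with hε
  have hε0 : ∀ n, 0 ≤ ε n := by
    intro n
    have : (0:ℝ) < 1 - ‖a‖ := by linarith
    positivity
  have key : ∀ n : ℕ, N w ≤ 1 + ε n + L * ε n := by
    intro n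
    have hvn' : N (fun i => (mobPoly a n).eval (u i)) ≤ supDisk (mobPoly a n) :=
      hvn u hu (mobPoly a n)
    have h1 : N (fun i => (mobPoly a n).eval (u i)) ≤ 1 + ε n :=
      le_trans hvn' (supDisk_mobPoly_le ha n)
    have h2 : N (w - fun i => (mobPoly a n).eval (u i)) ≤ L * ε n := by
      calc N (w - fun i => (mobPoly a n).eval (u i))
          ≤ ∑ i, ‖(w - fun i => (mobPoly a n).eval (u i)) i‖ * N (Pi.single i 1) :=
            ban_coord_bound h _
        _ ≤ ∑ i, ε n * N (Pi.single i 1) := by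
            refine Finset.sum_le_sum fun i _ => ?_
            refine mul_le_mul_of_nonneg_right ?_ (ban_nonneg h _)
            have := mob_approx ha (hcoord i) n
            simpa [hw] using this
        _ = L * ε n := by rw [← Finset.mul_sum]; ring
    have h3 : N w ≤ N (fun i => (mobPoly a n).eval (u i))
        + N (w - fun i => (mobPoly a n).eval (u i)) := by
      have := h.2.2.1 (fun i => (mobPoly a n).eval (u i))
        (w - fun i => (mobPoly a n).eval (u i))
      simpa using this
    linarith
  have htend : Tendsto (fun n => 1 + ε n + L * ε n) atTop (nhds 1) := by
    have hεt : Tendsto ε atTop (nhds 0) := by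
      rw [hε]
      have := (tendsto_pow_atTop_nhds_zero_of_lt_one (norm_nonneg a) ha).const_mul
        ((1 + ‖a‖) / (1 - ‖a‖))
      simpa using this
    have := ((tendsto_const_nhds (x := (1:ℝ))).add hεt).add (hεt.const_mul L)
    simpa using this
  exact ge_of_tendsto' htend key

lemma ball_subset {N₁ N₂ : (Fin (k+1) → ℂ) → ℝ}
    (h₁ : IsBanachAlgebraNorm (k+1) N₁) (h₂ : IsBanachAlgebraNorm (k+1) N₂)
    (hvn₁ : SatisfiesVonNeumann (k+1) N₁) (hvn₂ : SatisfiesVonNeumann (k+1) N₂)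
    (hhat : hat k {v | N₁ v ≤ 1} = hat k {v | N₂ v ≤ 1})
    (v : Fin (k+1) → ℂ) (hv : N₁ v ≤ 1) : N₂ v ≤ 1 := by
  have hvc : ∀ i, ‖v i‖ ≤ 1 := ban_coord_le_one h₁ v hv
  suffices hr : ∀ r : ℝ, 0 < r → r < 1 → r * N₂ v ≤ 1 by
    by_contra hgt
    push_neg at hgt
    have hN2 : 0 < N₂ v := by linarith
    have h1 : (0:ℝ) < (1 + N₂ v) / (2 * N₂ v) := by positivity
    have h2 : (1 + N₂ v) / (2 * N₂ v) < 1 := by rw [div_lt_one (by positivity)]; linarith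
    have := hr _ h1 h2
    rw [div_mul_eq_mul_div, mul_comm] at this
    rw [div_le_one (by positivity)] at this
    nlinarith
  intro r hr0 hr1
  set u : Fin (k+1) → ℂ := ((r : ℝ) : ℂ) • v with hu
  have hru : N₁ u ≤ 1 := by
    rw [hu, h₁.2.1]
    simp only [Complex.norm_real, Real.norm_eq_abs, abs_of_pos hr0]
    nlinarith [ban_nonneg h₁ v]
  have hucoord : ∀ i, ‖u i‖ < 1 := by
    intro i
    rw [hu]
    simp only [Pi.smul_apply, smul_eq_mul, norm_mul, Complex.norm_real,
      Real.norm_eq_abs, abs_of_pos hr0]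
    nlinarith [hvc i, norm_nonneg (v i)]
  set a : ℂ := u 0 with ha
  have haN : ‖a‖ < 1 := hucoord 0
  set w : Fin (k+1) → ℂ := fun i => (u i - a) / (1 - starRingEnd ℂ a * u i) with hwdef
  have hw1 : N₁ w ≤ 1 := mobius_step h₁ hvn₁ haN hru
  have hw0 : w 0 = 0 := by rw [hwdef]; simp [ha]
  have hwmem : w ∈ {v : Fin (k+1) → ℂ | N₂ v ≤ 1} := by
    have hmem1 : Fin.tail w ∈ hat k {v : Fin (k+1) → ℂ | N₁ v ≤ 1} := by
      show Fin.cons (0:ℂ) (Fin.tail w) ∈ {v : Fin (k+1) → ℂ | N₁ v ≤ 1}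
      rw [← hw0, Fin.cons_self_tail]
      exact hw1
    rw [hhat] at hmem1
    have : Fin.cons (0:ℂ) (Fin.tail w) ∈ {v : Fin (k+1) → ℂ | N₂ v ≤ 1} := hmem1
    rwa [← hw0, Fin.cons_self_tail] at this
  have hw2 : N₂ w ≤ 1 := hwmem
  have haN' : ‖-a‖ < 1 := by rwa [norm_neg]
  have hstep := mobius_step h₂ hvn₂ haN' hw2
  have hinv : (fun i => (w i - (-a)) / (1 - starRingEnd ℂ (-a) * w i)) = u := by
    funext i
    have hden0 : (1 : ℂ) - starRingEnd ℂ a * u i ≠ 0 :=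
      (mob_den_norm haN (le_of_lt (hucoord i))).2
    have haa : (1 : ℂ) - starRingEnd ℂ a * a ≠ 0 := by
      intro hc
      have h1 : ‖starRingEnd ℂ a * a‖ < 1 := by
        rw [norm_mul, RCLike.norm_conj]
        nlinarith [norm_nonneg a]
      have h2 : (1 : ℂ) = starRingEnd ℂ a * a := by linear_combination hc
      rw [← h2] at h1
      simp at h1
    have hne : (1 : ℂ) - starRingEnd ℂ (-a) * w i ≠ 0 := by
      rw [map_neg, hwdef]
      have : (1 : ℂ) - -(starRingEnd ℂ a) * ((u i - a) / (1 - starRingEnd ℂ a * u i))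
          = (1 - starRingEnd ℂ a * a) / (1 - starRingEnd ℂ a * u i) := by
        field_simp
        ring
      rw [this]
      exact div_ne_zero haa hden0
    rw [div_eq_iff hne, map_neg, hwdef]
    beta_reduce
    linear_combination (u i - a) * mul_inv_cancel₀ hden0
  rw [hinv] at hstep
  have : N₂ u = r * N₂ v := by
    rw [hu, h₂.2.1]
    simp [Complex.norm_real, Real.norm_eq_abs, abs_of_pos hr0]
  linarith [hstep, this.symm.le, this.le]

end Main


/-- Two closed unit balls of Banach algebra norms on `ℂ^{k+1}` (with `k + 1 ≥ 2`)
satisfying von Neumann's inequality are equal if and only if their slices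
`V̂ = {(v₂,...,v_{k+1}) : (0,v₂,...,v_{k+1}) ∈ V}` are equal. -/
theorem stmt5 (k : ℕ) (hk : 1 ≤ k) (N₁ N₂ : (Fin (k + 1) → ℂ) → ℝ)
    (h₁ : IsBanachAlgebraNorm (k + 1) N₁) (h₂ : IsBanachAlgebraNorm (k + 1) N₂)
    (hv₁ : SatisfiesVonNeumann (k + 1) N₁) (hv₂ : SatisfiesVonNeumann (k + 1) N₂)
    (V₁ V₂ : Set (Fin (k + 1) → ℂ))
    (hV₁ : V₁ = {v | N₁ v ≤ 1}) (hV₂ : V₂ = {v | N₂ v ≤ 1}) :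
    V₁ = V₂ ↔ hat k V₁ = hat k V₂ := by
  subst hV₁ hV₂
  constructor
  · intro h; rw [h]
  · intro hhat
    ext v
    exact ⟨ball_subset h₁ h₂ hv₁ hv₂ hhat v, ball_subset h₂ h₁ hv₂ hv₁ hhat.symm v⟩
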